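/- arXiv:1806.02775 — 2 statements merged into one kernel-verified Lean document; each statement's English description precedes it below -/
import Mathlib

section
/- Let d ≥ 1, let p, ρ : ℝ^d → ℝ be positive differentiable functions, set w(x) = ρ(x)/p(x), let μ be a measure on ℝ^d, and let F be any set of differentiable vector fields φ : ℝ^d → ℝ^d. Then the supremum over φ ∈ F of ∫ w(x)·(⟨∇log ρ(x), φ(x)⟩ + div φ(x)) dμ(x) is equal to the supremum over ψ in the set wF := {w·φ : φ ∈ F} of ∫ (⟨∇log p(x), ψ(x)⟩ + div ψ(x)) dμ(x). In other words, the importance-weighted Stein discrepancy S_{F,ρ}(μ ‖ p) equals the standard Stein discrepancy S_{wF}(μ ‖ p) over the reweighted function class wF. (Theorem 1 of the paper, discrepancy form.) -/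
open Real MeasureTheory
open scoped InnerProductSpace BigOperators

/-- Divergence of a vector field: trace of the Fréchet derivative. -/
noncomputable def divg {d : ℕ} (f : EuclideanSpace ℝ (Fin d) → EuclideanSpace ℝ (Fin d))
    (x : EuclideanSpace ℝ (Fin d)) : ℝ :=
  LinearMap.trace ℝ _ (fderiv ℝ f x : EuclideanSpace ℝ (Fin d) →ₗ[ℝ] EuclideanSpace ℝ (Fin d))

section aux

variable {d : ℕ}

local notation "E" => EuclideanSpace ℝ (Fin d)

lemma trace_smulRight_aux (l : E →ₗ[ℝ] ℝ) (v : E) :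
    LinearMap.trace ℝ E (l.smulRight v) = l v := by
  have h : l.smulRight v = dualTensorHom ℝ E E (l ⊗ₜ v) := by
    ext x; simp
  rw [h, LinearMap.trace_eq_contract_apply, contractLeft_apply]

lemma inner_gradient_log (f : E → ℝ) (x : E) (hf : DifferentiableAt ℝ f x)
    (hfx : 0 < f x) (v : E) :
    ⟪gradient (fun y => Real.log (f y)) x, v⟫_ℝ = (f x)⁻¹ * fderiv ℝ f x v := by
  have hl : HasFDerivAt (fun y => Real.log (f y)) ((f x)⁻¹ • fderiv ℝ f x) x :=
    hf.hasFDerivAt.log hfx.ne'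
  rw [gradient, InnerProductSpace.toDual_symm_apply, hl.fderiv]
  simp

lemma key_pointwise (p ρ : E → ℝ) (hp : ∀ y, 0 < p y) (hρ : ∀ y, 0 < ρ y)
    (hpd : Differentiable ℝ p) (hρd : Differentiable ℝ ρ)
    (w : E → ℝ) (hw : w = fun y => ρ y / p y)
    (φ : E → E) (hφ : Differentiable ℝ φ) (x : E) :
    w x * (⟪gradient (fun y => Real.log (ρ y)) x, φ x⟫_ℝ + divg φ x)
      = ⟪gradient (fun y => Real.log (p y)) x, w x • φ x⟫_ℝ
        + divg (fun y => w y • φ y) x := by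
  have hpx := hp x
  have hρx := hρ x
  have hwd : DifferentiableAt ℝ w x := by
    rw [hw]
    simp only [div_eq_mul_inv]
    exact (hρd x).mul ((hpd x).inv hpx.ne')
  -- product rule relating fderiv w to fderiv ρ and fderiv p
  have hwp : (fun y => w y * p y) = ρ := by
    funext y; rw [hw]; exact div_mul_cancel₀ _ (hp y).ne' 
  have hD : fderiv ℝ ρ x = w x • fderiv ℝ p x + p x • fderiv ℝ w x := by
    rw [← hwp]; exact fderiv_mul hwd (hpd x)
  have hDv : fderiv ℝ ρ x (φ x) = w x * fderiv ℝ p x (φ x) + p x * fderiv ℝ w x (φ x) := by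
    rw [hD]; simp
  -- divergence of the scaled field
  have hdiv : divg (fun y => w y • φ y) x
      = w x * divg φ x + fderiv ℝ w x (φ x) := by
    unfold divg
    rw [fderiv_fun_smul hwd (hφ x)]
    push_cast
    rw [map_add, _root_.map_smul, smul_eq_mul]
    have h2 : ((fderiv ℝ w x).smulRight (φ x) : E →ₗ[ℝ] E)
        = ((fderiv ℝ w x : E →ₗ[ℝ] ℝ).smulRight (φ x)) := by
      ext v; simp
    rw [h2, trace_smulRight_aux]
    simp
  rw [inner_gradient_log ρ x (hρd x) hρx, inner_gradient_log p x (hpd x) hpx,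
    (fderiv ℝ p x).map_smul, hdiv, hDv, smul_eq_mul]
  have hwx : w x = ρ x / p x := by rw [hw]
  rw [hwx]
  field_simp
  ring

end aux

/-- Theorem 1 of the paper (discrepancy form): the importance-weighted Stein
discrepancy `S_{F,ρ}(μ‖p)` equals the standard Stein discrepancy over the
reweighted function class `wF`. -/
theorem gf_svgd_stmt1 (d : ℕ) (hd : 1 ≤ d)
    (p ρ : EuclideanSpace ℝ (Fin d) → ℝ)
    (hp : ∀ y, 0 < p y) (hρ : ∀ y, 0 < ρ y)
    (hpd : Differentiable ℝ p) (hρd : Differentiable ℝ ρ)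
    (w : EuclideanSpace ℝ (Fin d) → ℝ) (hw : w = fun y => ρ y / p y)
    (μ : Measure (EuclideanSpace ℝ (Fin d)))
    (F : Set (EuclideanSpace ℝ (Fin d) → EuclideanSpace ℝ (Fin d)))
    (hF : ∀ φ ∈ F, Differentiable ℝ φ)
    (wF : Set (EuclideanSpace ℝ (Fin d) → EuclideanSpace ℝ (Fin d)))
    (hwF : wF = (fun φ => fun y => w y • φ y) '' F) :
    (⨆ φ : F, ∫ x, w x * (⟪gradient (fun y => Real.log (ρ y)) x, φ.1 x⟫_ℝ
        + divg φ.1 x) ∂μ)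
      = ⨆ ψ : wF, ∫ x, (⟪gradient (fun y => Real.log (p y)) x, ψ.1 x⟫_ℝ
        + divg ψ.1 x) ∂μ := by
  have key : ∀ φ ∈ F,
      (∫ x, w x * (⟪gradient (fun y => Real.log (ρ y)) x, φ x⟫_ℝ + divg φ x) ∂μ)
      = ∫ x, (⟪gradient (fun y => Real.log (p y)) x, (fun y => w y • φ y) x⟫_ℝ
          + divg (fun y => w y • φ y) x) ∂μ := by
    intro φ hφ
    congr 1
    funext x
    exact key_pointwise p ρ hp hρ hpd hρd w hw φ (hF φ hφ) x
  rw [iSup, iSup]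
  congr 1
  ext r
  simp only [Set.mem_range]
  constructor
  · rintro ⟨⟨φ, hφ⟩, rfl⟩
    refine ⟨⟨fun y => w y • φ y, ?_⟩, ?_⟩
    · rw [hwF]; exact ⟨φ, hφ, rfl⟩
    · exact (key φ hφ).symm
  · rintro ⟨⟨ψ, hψ⟩, rfl⟩
    rw [hwF] at hψ
    obtain ⟨φ, hφ, rfl⟩ := hψ
    exact ⟨⟨φ, hφ⟩, key φ hφ⟩
end

section
/- Let d ≥ 1, let p, ρ : ℝ^d → ℝ be positive functions, differentiable at given points, set w = ρ/p, and let k : ℝ^d → ℝ^d → ℝ be a kernel differentiable in its first argument. Fix particles x_1, …, x_n ∈ ℝ^d. Define the gradient-free SVGD direction at x_i as Δ_i = ∑_{j=1}^n w(x_j)·(∇log ρ(x_j)·k(x_j, x_i) + ∇_{x_j} k(x_j, x_i)), and define the standard SVGD direction with the importance-weighted kernel k̃(x, y) = w(x)·w(y)·k(x, y) as Δ̃_i = ∑_{j=1}^n (∇log p(x_j)·k̃(x_j, x_i) + ∇_{x_j} k̃(x_j, x_i)). Then Δ̃_i = w(x_i)·Δ_i for every i = 1, …, n. Hence the gradient-free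 SVGD update is, up to the per-particle scalar step factor w(x_i), the standard SVGD update with kernel k̃. -/
/-!
With `w = ρ / p`, the product rule gives `∇_y k̃(y, xᵢ) = w(xᵢ) (w ∇k + k ∇w)`, and the quotient
rule gives `∇w = w (∇ log ρ - ∇ log p)`. The term `-w(xᵢ) w k ∇ log p` cancels the driving term
`k̃ ∇ log p`, leaving `w(xᵢ) w(xⱼ) (k ∇ log ρ + ∇k)` in each summand.
-/

open scoped Gradient

section GradientCalculus

variable {F : Type*} [NormedAddCommGroup F] [InnerProductSpace ℝ F] [CompleteSpace F]
  {f g : F → ℝ} {f' g' x : F}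

theorem HasGradientAt.mul (hf : HasGradientAt f f' x) (hg : HasGradientAt g g' x) :
    HasGradientAt (fun y => f y * g y) (f x • g' + g x • f') x := by
  rw [hasGradientAt_iff_hasFDerivAt] at *
  rw [map_add, map_smul, map_smul]
  exact hf.mul hg

theorem HasGradientAt.inv (hf : HasGradientAt f f' x) (hx : f x ≠ 0) :
    HasGradientAt (fun y => (f y)⁻¹) (-(f x ^ 2)⁻¹ • f') x := by
  rw [hasGradientAt_iff_hasFDerivAt] at *
  rw [map_smul]
  exact (hasDerivAt_inv hx).comp_hasFDerivAt x hf

theorem HasGradientAt.log (hf : HasGradientAt f f' x) (hx : f x ≠ 0) :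
    HasGradientAt (fun y => Real.log (f y)) ((f x)⁻¹ • f') x := by
  rw [hasGradientAt_iff_hasFDerivAt] at *
  simpa only [map_smul] using hf.log hx

theorem gradient_log (hf : DifferentiableAt ℝ f x) (hx : f x ≠ 0) :
    ∇ (fun y => Real.log (f y)) x = (f x)⁻¹ • ∇ f x :=
  (hf.hasGradientAt.log hx).gradient

theorem HasGradientAt.div (hf : HasGradientAt f f' x) (hg : HasGradientAt g g' x) (hx : g x ≠ 0) :
    HasGradientAt (fun y => f y / g y) ((g x)⁻¹ • f' - (f x / g x ^ 2) • g') x := by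
  have h := hf.mul (hg.inv hx)
  simp only [← div_eq_mul_inv] at h
  convert h using 1
  module

variable {p ρ k : F → ℝ}

theorem smul_gradient_log_add_gradient_weighted_kernel (hp : DifferentiableAt ℝ p x)
    (hρ : DifferentiableAt ℝ ρ x) (hk : DifferentiableAt ℝ k x) (hp₀ : p x ≠ 0) (hρ₀ : ρ x ≠ 0)
    (c : ℝ) :
    (ρ x / p x * c * k x) • ∇ (fun y => Real.log (p y)) x + ∇ (fun y => ρ y / p y * c * k y) x
      = c • (ρ x / p x) • (k x • ∇ (fun y => Real.log (ρ y)) x + ∇ k x) := by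
  have hw := ((hρ.hasGradientAt.div hp.hasGradientAt hp₀).mul (hasGradientAt_const x c)).mul
    hk.hasGradientAt
  rw [hw.gradient, gradient_log hp hp₀, gradient_log hρ hρ₀]
  match_scalars <;> field_simp
  ring

end GradientCalculus

theorem gf_svgd_stmt7_general (d : ℕ)
    (p ρ : EuclideanSpace ℝ (Fin d) → ℝ)
    (hp : ∀ y, 0 < p y) (hρ : ∀ y, 0 < ρ y)
    (k : EuclideanSpace ℝ (Fin d) → EuclideanSpace ℝ (Fin d) → ℝ)
    (hk : ∀ y, Differentiable ℝ (fun z => k z y))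
    (w : EuclideanSpace ℝ (Fin d) → ℝ) (hw : w = fun y => ρ y / p y)
    (ktilde : EuclideanSpace ℝ (Fin d) → EuclideanSpace ℝ (Fin d) → ℝ)
    (hktilde : ktilde = fun x y => w x * w y * k x y)
    (n : ℕ) (x : Fin n → EuclideanSpace ℝ (Fin d))
    (hpd : ∀ j, DifferentiableAt ℝ p (x j))
    (hρd : ∀ j, DifferentiableAt ℝ ρ (x j))
    (Δ Δtilde : Fin n → EuclideanSpace ℝ (Fin d))
    (hΔ : Δ = fun i => ∑ j, w (x j) •
        (k (x j) (x i) • gradient (fun y => Real.log (ρ y)) (x j)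
          + gradient (fun y => k y (x i)) (x j)))
    (hΔtilde : Δtilde = fun i => ∑ j,
        (ktilde (x j) (x i) • gradient (fun y => Real.log (p y)) (x j)
          + gradient (fun y => ktilde y (x i)) (x j))) :
    ∀ i, Δtilde i = w (x i) • Δ i := by
  intro i
  subst hw hktilde hΔ hΔtilde
  rw [Finset.smul_sum]
  refine Finset.sum_congr rfl fun j _ => ?_
  exact smul_gradient_log_add_gradient_weighted_kernel (hpd j) (hρd j) (hk (x i) (x j))
    (hp _).ne' (hρ _).ne' _

/-- The gradient-free SVGD direction is, up to the per-particle factor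
`w(x_i)`, the standard SVGD direction with the importance-weighted kernel
`k̃(x,y) = w(x)w(y)k(x,y)`: `Δ̃_i = w(x_i)·Δ_i`. -/
theorem gf_svgd_stmt7 (d : ℕ) (hd : 1 ≤ d)
    (p ρ : EuclideanSpace ℝ (Fin d) → ℝ)
    (hp : ∀ y, 0 < p y) (hρ : ∀ y, 0 < ρ y)
    (k : EuclideanSpace ℝ (Fin d) → EuclideanSpace ℝ (Fin d) → ℝ)
    (hk : ∀ y, Differentiable ℝ (fun z => k z y))
    (w : EuclideanSpace ℝ (Fin d) → ℝ) (hw : w = fun y => ρ y / p y)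
    (ktilde : EuclideanSpace ℝ (Fin d) → EuclideanSpace ℝ (Fin d) → ℝ)
    (hktilde : ktilde = fun x y => w x * w y * k x y)
    (n : ℕ) (x : Fin n → EuclideanSpace ℝ (Fin d))
    (hpd : ∀ j, DifferentiableAt ℝ p (x j))
    (hρd : ∀ j, DifferentiableAt ℝ ρ (x j))
    (Δ Δtilde : Fin n → EuclideanSpace ℝ (Fin d))
    (hΔ : Δ = fun i => ∑ j, w (x j) •
        (k (x j) (x i) • gradient (fun y => Real.log (ρ y)) (x j)
          + gradient (fun y => k y (x i)) (x j)))
    (hΔtilde : Δtilde = fun i => ∑ j,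
        (ktilde (x j) (x i) • gradient (fun y => Real.log (p y)) (x j)
          + gradient (fun y => ktilde y (x i)) (x j))) :
    ∀ i, Δtilde i = w (x i) • Δ i :=
  gf_svgd_stmt7_general d p ρ hp hρ k hk w hw ktilde hktilde n x hpd hρd Δ Δtilde hΔ hΔtilde
end
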